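/- arXiv:1306.1713 — 4 statements merged into one kernel-verified Lean document; each statement's English description precedes it below -/
import Mathlib

section
/- For every integer p ≥ 3, if q is a natural number with p! ≤ Σ_{i=0}^{q-1} (p-1)^i, then q > p(1 - 1/ln p). -/
lemma geom_sum_lt_pow (r : ℕ) (hr : 2 ≤ r) (q : ℕ) :
    ∑ i ∈ Finset.range q, r ^ i < r ^ q := by
  induction q with
  | zero => simp
  | succ n ih =>
    rw [Finset.sum_range_succ, pow_succ]
    have : r ^ n * 2 ≤ r ^ n * r := by
      exact Nat.mul_le_mul_left _ hr
    omega

theorem ab_info_lower_bound (p q : ℕ) (hp : 3 ≤ p)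
    (h : Nat.factorial p ≤ ∑ i ∈ Finset.range q, (p - 1) ^ i) :
    (q : ℝ) > (p : ℝ) * (1 - 1 / Real.log p) := by
  have hp0 : (0:ℝ) < p := by positivity
  -- factorial bound: p^p ≤ exp p * p!
  have hfac : (p:ℝ) ^ p ≤ Real.exp p * Nat.factorial p := by
    have := Real.pow_div_factorial_le_exp (x := (p:ℝ)) hp0.le p
    have hfp : (0:ℝ) < (Nat.factorial p : ℝ) := by positivity
    rw [div_le_iff₀ hfp] at this
    linarith [this]
  -- sum bound: p! < p^q in ℕ
  have hnat : Nat.factorial p < p ^ q := by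
    calc Nat.factorial p ≤ ∑ i ∈ Finset.range q, (p - 1) ^ i := h
      _ < (p - 1) ^ q := geom_sum_lt_pow _ (by omega) q
      _ ≤ p ^ q := Nat.pow_le_pow_left (by omega) q
  have hq : (Nat.factorial p : ℝ) < (p:ℝ) ^ q := by
    exact_mod_cast hnat
  have hkey : (p:ℝ) ^ p < Real.exp p * (p:ℝ) ^ q := by
    calc (p:ℝ) ^ p ≤ Real.exp p * Nat.factorial p := hfac
      _ < Real.exp p * (p:ℝ) ^ q := by
          exact mul_lt_mul_of_pos_left hq (Real.exp_pos _)
  -- take logs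
  have hlog1 : 1 < Real.log p := by
    have h3 : (3:ℝ) ≤ (p:ℝ) := by exact_mod_cast hp
    have : Real.exp 1 < (p:ℝ) := lt_of_lt_of_le (by
      linarith [Real.exp_one_lt_d9]) h3
    calc 1 = Real.log (Real.exp 1) := (Real.log_exp 1).symm
      _ < Real.log p := Real.log_lt_log (Real.exp_pos 1) this
  have hL : (0:ℝ) < Real.log p := by linarith
  have hlogs : (p:ℝ) * Real.log p < (p:ℝ) + (q:ℝ) * Real.log p := by
    have := Real.log_lt_log (by positivity) hkey
    rw [Real.log_pow, Real.log_mul (Real.exp_ne_zero _) (by positivity),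
      Real.log_exp, Real.log_pow] at this
    exact this
  -- conclude
  rw [gt_iff_lt]
  have hmul : (p:ℝ) * (1 - 1 / Real.log p) * Real.log p
      = (p:ℝ) * Real.log p - (p:ℝ) := by
    field_simp
  have : (p:ℝ) * (1 - 1 / Real.log p) * Real.log p < (q:ℝ) * Real.log p := by
    rw [hmul]; linarith
  exact lt_of_mul_lt_mul_right this hL.le
end

section
/- Let p ≥ 2 and c ≥ p. In the game ABB(p,c), for any set of at most c - p questions (each question being an injective function from Fin p to Fin c), there exists a secret (an injective function from Fin p to Fin c) that agrees with each of these questions in no position. Equivalently: given at most c - p injective functions q_1,...,q_m : Fin p → Fin c with m ≤ c - p, there exists an injective s : Fin p → Fin c such that s(i) ≠ q_j(i) for all i ∈ Fin p and all j. -/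
lemma greedy_avoid (c m : ℕ) : ∀ n, n + m ≤ c →
    ∀ F : Fin n → Finset (Fin c), (∀ i, (F i).card ≤ m) →
    ∃ s : Fin n → Fin c, Function.Injective s ∧ ∀ i, s i ∉ F i := by
  intro n
  induction n with
  | zero =>
    intro _ F _
    exact ⟨Fin.elim0, fun i => i.elim0, fun i => i.elim0⟩
  | succ n ih =>
    intro hn F hF
    obtain ⟨s0, hs0inj, hs0⟩ := ih (by omega) (fun i => F i.castSucc)
      (fun i => hF i.castSucc)
    set T : Finset (Fin c) := F (Fin.last n) ∪ Finset.image s0 Finset.univ with hT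
    have hTcard : T.card < c := by
      calc T.card ≤ (F (Fin.last n)).card + (Finset.image s0 Finset.univ).card :=
            Finset.card_union_le _ _
        _ ≤ m + n := by
            have := hF (Fin.last n)
            have := Finset.card_image_le (f := s0) (s := Finset.univ)
            simp only [Finset.card_univ, Fintype.card_fin] at *
            omega
        _ < c := by omega
    have : ∃ x : Fin c, x ∉ T := by
      by_contra h
      push_neg at h
      have : Finset.univ ⊆ T := fun x _ => h x
      have := Finset.card_le_card this
      simp [Finset.card_univ] at this
      omega
    obtain ⟨x, hx⟩ := this
    have hx1 : x ∉ F (Fin.last n) := fun h => hx (Finset.mem_union_left _ h)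
    have hx2 : ∀ i, x ≠ s0 i := by
      intro i h
      exact hx (Finset.mem_union_right _ (Finset.mem_image.2 ⟨i, Finset.mem_univ _, h.symm⟩))
    refine ⟨Fin.snoc s0 x, ?_, ?_⟩
    · intro a b hab
      induction a using Fin.lastCases with
      | last =>
        induction b using Fin.lastCases with
        | last => rfl
        | cast b =>
          simp [Fin.snoc_last, Fin.snoc_castSucc] at hab
          exact absurd hab (hx2 b)
      | cast a =>
        induction b using Fin.lastCases with
        | last =>
          simp [Fin.snoc_last, Fin.snoc_castSucc] at hab
          exact absurd hab.symm (hx2 a)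
        | cast b =>
          simp only [Fin.snoc_castSucc] at hab
          exact congrArg Fin.castSucc (hs0inj hab)
    · intro i
      induction i using Fin.lastCases with
      | last => simpa [Fin.snoc_last] using hx1
      | cast i => simpa [Fin.snoc_castSucc] using hs0 i

theorem codemaker_zero_answers (p c m : ℕ) (hp : 2 ≤ p) (hpc : p ≤ c)
    (hm : m ≤ c - p) (Q : Fin m → Fin p → Fin c)
    (hQ : ∀ j, Function.Injective (Q j)) :
    ∃ s : Fin p → Fin c, Function.Injective s ∧
      ∀ (i : Fin p) (j : Fin m), s i ≠ Q j i := by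
  obtain ⟨s, hsinj, hs⟩ := greedy_avoid c m p (by omega)
    (fun i => Finset.image (fun j => Q j i) Finset.univ)
    (fun i => by
      calc (Finset.image (fun j => Q j i) Finset.univ).card ≤ Finset.univ.card :=
            Finset.card_image_le
        _ = m := by simp)
  refine ⟨s, hsinj, fun i j h => hs i ?_⟩
  exact Finset.mem_image.2 ⟨j, Finset.mem_univ _, h.symm⟩
end

section
/- Let p = 4 and consider a state table with 4 rows, each containing exactly 5 colors, where every color has a row set of size at least 2 (no single row sets). Then the total number of (row, color) incidences is 20, and the number of colors whose row set has size exactly 2 is at most 4. -/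
private lemma pair_mem_aux {β : Type*} [DecidableEq β] {s : Finset β} (h : s.card = 2)
    {c : β} (hc : c ∈ s) : ∃ x, x ≠ c ∧ s = {c, x} := by
  obtain ⟨u, v, huv, rfl⟩ := Finset.card_eq_two.mp h
  rcases Finset.mem_insert.mp hc with rfl | hc
  · exact ⟨v, fun h => huv h.symm, rfl⟩
  · rcases Finset.mem_singleton.mp hc with rfl
    exact ⟨u, huv, Finset.pair_comm u c⟩

theorem state_p4_pair_bound {α : Type*} [Fintype α] [DecidableEq α]
    (state : Fin 4 → Finset α) (hcard : ∀ i, (state i).card = 5)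
    (rowSet : α → Finset (Fin 4))
    (hrow : ∀ k i, i ∈ rowSet k ↔ k ∈ state i)
    (hns : ∀ k, (∃ i, k ∈ state i) → 2 ≤ (rowSet k).card)
    (hpair : ∀ k l, (rowSet k).card = 2 → (rowSet l).card = 2 →
      (rowSet k ∩ rowSet l).Nonempty) :
    (∑ i, (state i).card = 20) ∧
    (Finset.univ.filter (fun k : α => (rowSet k).card = 2)).card ≤ 4 := by
  have hsum : ∑ i, (state i).card = 20 := by simp [hcard]
  refine ⟨hsum, ?_⟩
  by_contra hP5
  push_neg at hP5
  set P : Finset α := Finset.univ.filter (fun k : α => (rowSet k).card = 2) with hPdef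
  have hmemP : ∀ k, k ∈ P ↔ (rowSet k).card = 2 := by
    intro k; simp [hPdef]
  have hrs : ∀ k, rowSet k = Finset.univ.filter (fun i => k ∈ state i) := by
    intro k; ext i; simp [hrow]
  -- double counting
  have hdc : ∀ S : Finset α, ∑ k ∈ S, (rowSet k).card
      = ∑ i : Fin 4, (S.filter (fun k => k ∈ state i)).card := by
    intro S
    simp only [hrs, Finset.card_filter]
    exact Finset.sum_comm
  set n : Fin 4 → ℕ := fun i => (P.filter (fun k => k ∈ state i)).card with hndef
  have hsum2 : ∑ i : Fin 4, n i = 2 * P.card := by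
    rw [← hdc P]
    rw [Finset.sum_congr rfl (fun k hk => (hmemP k).mp hk), Finset.sum_const, smul_eq_mul,
      mul_comm]
  -- nonpair support colors
  set Q : Finset α := Finset.univ.filter (fun k : α => 3 ≤ (rowSet k).card) with hQdef
  have hPQdisj : Disjoint P Q := by
    rw [Finset.disjoint_left]
    intro k hk hk'
    rw [hmemP] at hk
    simp only [hQdef, Finset.mem_filter] at hk'
    omega
  have hPQ : 2 * P.card + 3 * Q.card ≤ 20 := by
    have h1 : ∑ k ∈ P ∪ Q, (rowSet k).card ≤ ∑ k : α, (rowSet k).card :=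
      Finset.sum_le_sum_of_subset (Finset.subset_univ _)
    have h2 : ∑ k : α, (rowSet k).card = 20 := by
      rw [hdc]
      have : ∀ i : Fin 4, (Finset.univ.filter (fun k => k ∈ state i)) = state i := by
        intro i; ext k; simp
      simp only [this]
      exact hsum
    rw [Finset.sum_union hPQdisj] at h1
    have h3 : ∑ k ∈ P, (rowSet k).card = 2 * P.card := by
      rw [Finset.sum_congr rfl (fun k hk => (hmemP k).mp hk), Finset.sum_const, smul_eq_mul,
        mul_comm]
    have h4 : Q.card * 3 ≤ ∑ k ∈ Q, (rowSet k).card := by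
      have := Finset.card_nsmul_le_sum Q (fun k => (rowSet k).card) 3
        (fun k hk => by simpa [hQdef] using hk)
      simpa using this
    omega
  have hQ3 : Q.card ≤ 3 := by omega
  -- every row has at least 2 pair colors
  have hni : ∀ i, 2 ≤ n i := by
    intro i
    have hsub : state i ⊆ (P.filter (fun k => k ∈ state i)) ∪ Q := by
      intro k hk
      have h2 := hns k ⟨i, hk⟩
      rcases eq_or_lt_of_le h2 with h | h
      · exact Finset.mem_union_left _ (Finset.mem_filter.mpr ⟨(hmemP k).mpr h.symm, hk⟩)
      · exact Finset.mem_union_right _ (by simp [hQdef]; omega)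
    have := Finset.card_le_card hsub
    have hle := Finset.card_union_le (P.filter (fun k => k ∈ state i)) Q
    rw [hcard i] at this
    have : 5 ≤ n i + Q.card := by
      calc 5 ≤ _ := this
        _ ≤ _ := hle
    omega
  -- existence of a pair color in each row
  have hex : ∀ i : Fin 4, ∃ k ∈ P, i ∈ rowSet k := by
    intro i
    have h1 : 0 < n i := lt_of_lt_of_le (by norm_num) (hni i)
    obtain ⟨k, hk⟩ := Finset.card_pos.mp h1
    rw [Finset.mem_filter] at hk
    exact ⟨k, hk.1, (hrow k i).mpr hk.2⟩
  -- structural part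
  obtain ⟨k0, hk0⟩ := Finset.card_pos.mp (lt_of_lt_of_le (by norm_num) (le_of_lt hP5))
  obtain ⟨a, b, hab, hk0eq⟩ := Finset.card_eq_two.mp ((hmemP k0).mp hk0)
  -- the other two rows
  have habcard : ({a, b} : Finset (Fin 4)).card = 2 := Finset.card_pair hab
  have hcompl : (({a, b} : Finset (Fin 4))ᶜ).card = 2 := by
    rw [Finset.card_compl, habcard]; rfl
  obtain ⟨c, d, hcd, hcompl_eq⟩ := Finset.card_eq_two.mp hcompl
  have hc : c ∉ ({a, b} : Finset (Fin 4)) := by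
    rw [← Finset.mem_compl, hcompl_eq]; simp
  have hd : d ∉ ({a, b} : Finset (Fin 4)) := by
    rw [← Finset.mem_compl, hcompl_eq]; simp
  simp only [Finset.mem_insert, Finset.mem_singleton, not_or] at hc hd
  obtain ⟨k1, hk1P, hk1c⟩ := hex c
  obtain ⟨x, hxc, hk1eq⟩ := pair_mem_aux ((hmemP k1).mp hk1P) hk1c
  obtain ⟨k2, hk2P, hk2d⟩ := hex d
  obtain ⟨y, hyd, hk2eq⟩ := pair_mem_aux ((hmemP k2).mp hk2P) hk2d
  -- x ∈ {a,b}
  have hxab : x = a ∨ x = b := by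
    obtain ⟨e, he⟩ := hpair k1 k0 ((hmemP k1).mp hk1P) ((hmemP k0).mp hk0)
    rw [Finset.mem_inter, hk1eq, hk0eq] at he
    simp only [Finset.mem_insert, Finset.mem_singleton] at he
    obtain ⟨h1, h2⟩ := he
    rcases h1 with h1 | h1
    · rcases h2 with h2 | h2
      · exact absurd (h1.symm.trans h2) hc.1
      · exact absurd (h1.symm.trans h2) hc.2
    · rcases h2 with h2 | h2
      · exact Or.inl (h1.symm.trans h2)
      · exact Or.inr (h1.symm.trans h2)
  have hyab : y = a ∨ y = b := by
    obtain ⟨e, he⟩ := hpair k2 k0 ((hmemP k2).mp hk2P) ((hmemP k0).mp hk0)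
    rw [Finset.mem_inter, hk2eq, hk0eq] at he
    simp only [Finset.mem_insert, Finset.mem_singleton] at he
    obtain ⟨h1, h2⟩ := he
    rcases h1 with h1 | h1
    · rcases h2 with h2 | h2
      · exact absurd (h1.symm.trans h2) hd.1
      · exact absurd (h1.symm.trans h2) hd.2
    · rcases h2 with h2 | h2
      · exact Or.inl (h1.symm.trans h2)
      · exact Or.inr (h1.symm.trans h2)
  have hxy : x = y := by
    obtain ⟨e, he⟩ := hpair k1 k2 ((hmemP k1).mp hk1P) ((hmemP k2).mp hk2P)
    rw [Finset.mem_inter, hk1eq, hk2eq] at he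
    simp only [Finset.mem_insert, Finset.mem_singleton] at he
    obtain ⟨h1, h2⟩ := he
    rcases h1 with h1 | h1
    · rcases h2 with h2 | h2
      · exact absurd (h1.symm.trans h2) hcd
      · have hcy : c = y := h1.symm.trans h2
        rcases hyab with hy | hy
        · exact absurd (hcy.trans hy) hc.1
        · exact absurd (hcy.trans hy) hc.2
    · rcases h2 with h2 | h2
      · have hxd : x = d := h1.symm.trans h2
        rcases hxab with hx | hx
        · exact absurd (hx.symm.trans hxd).symm hd.1
        · exact absurd (hx.symm.trans hxd).symm hd.2
      · exact h1.symm.trans h2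
  -- choose a0 (the common vertex) and b0 (the other vertex of rowSet k0)
  obtain ⟨a0, b0, ha0b0, hk0eq', hca0, hda0, hcb0, hdb0, hk1eq', hk2eq'⟩ :
      ∃ a0 b0 : Fin 4, a0 ≠ b0 ∧ rowSet k0 = {a0, b0} ∧ c ≠ a0 ∧ d ≠ a0 ∧ c ≠ b0 ∧ d ≠ b0 ∧
        rowSet k1 = {c, a0} ∧ rowSet k2 = {d, a0} := by
    rcases hxab with hx | hx
    · refine ⟨a, b, hab, hk0eq, hc.1, hd.1, hc.2, hd.2, ?_, ?_⟩
      · rw [hk1eq, hx]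
      · rw [hk2eq, ← hxy, hx]
    · refine ⟨b, a, Ne.symm hab, by rw [hk0eq, Finset.pair_comm], hc.2, hd.2, hc.1, hd.1,
        ?_, ?_⟩
      · rw [hk1eq, hx]
      · rw [hk2eq, ← hxy, hx]
  -- all pair colors contain a0
  have hstar : ∀ k ∈ P, a0 ∈ rowSet k := by
    intro k hk
    by_contra ha0k
    have hb0 : b0 ∈ rowSet k := by
      obtain ⟨e, he⟩ := hpair k k0 ((hmemP k).mp hk) ((hmemP k0).mp hk0)
      rw [Finset.mem_inter, hk0eq'] at he
      simp only [Finset.mem_insert, Finset.mem_singleton] at he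
      rcases he.2 with rfl | rfl
      · exact absurd he.1 ha0k
      · exact he.1
    have hcmem : c ∈ rowSet k := by
      obtain ⟨e, he⟩ := hpair k k1 ((hmemP k).mp hk) ((hmemP k1).mp hk1P)
      rw [Finset.mem_inter, hk1eq'] at he
      simp only [Finset.mem_insert, Finset.mem_singleton] at he
      rcases he.2 with rfl | rfl
      · exact he.1
      · exact absurd he.1 ha0k
    have hdmem : d ∈ rowSet k := by
      obtain ⟨e, he⟩ := hpair k k2 ((hmemP k).mp hk) ((hmemP k2).mp hk2P)
      rw [Finset.mem_inter, hk2eq'] at he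
      simp only [Finset.mem_insert, Finset.mem_singleton] at he
      rcases he.2 with rfl | rfl
      · exact he.1
      · exact absurd he.1 ha0k
    have hsub : ({b0, c, d} : Finset (Fin 4)) ⊆ rowSet k := by
      intro e he
      simp only [Finset.mem_insert, Finset.mem_singleton] at he
      rcases he with rfl | rfl | rfl <;> assumption
    have h3 : ({b0, c, d} : Finset (Fin 4)).card = 3 := by
      rw [Finset.card_insert_of_notMem (by simp [Ne.symm hcb0, Ne.symm hdb0]),
        Finset.card_pair hcd]
    have := Finset.card_le_card hsub
    rw [h3, (hmemP k).mp hk] at this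
    omega
  -- P ⊆ state a0
  have hfilter_eq : P.filter (fun k => k ∈ state a0) = P :=
    Finset.filter_true_of_mem (fun k hk => (hrow k a0).mp (hstar k hk))
  have hna0 : n a0 = P.card := by rw [hndef]; simp only [hfilter_eq]
  have hna0le : n a0 ≤ 5 := by
    have hsub : P.filter (fun k => k ∈ state a0) ⊆ state a0 := by
      intro k hk; exact (Finset.mem_filter.mp hk).2
    have := Finset.card_le_card hsub
    rw [hcard] at this
    exact this
  have hPcard : P.card = 5 := by omega
  -- final count
  have hsplit : n a0 + ∑ i ∈ Finset.univ.erase a0, n i = ∑ i : Fin 4, n i :=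
    Finset.add_sum_erase _ _ (Finset.mem_univ a0)
  have herase : (Finset.univ.erase a0).card * 2 ≤ ∑ i ∈ Finset.univ.erase a0, n i := by
    have := Finset.card_nsmul_le_sum (Finset.univ.erase a0) n 2 (fun i _ => hni i)
    simpa using this
  have hcard_erase : (Finset.univ.erase a0).card = 3 := by
    rw [Finset.card_erase_of_mem (Finset.mem_univ a0)]; rfl
  rw [hcard_erase] at herase
  rw [hsum2, hPcard, hna0, hPcard] at hsplit
  omega
end

section
/- Let q_k denote the cyclic question (k mod c, (k+1) mod c, ..., (k+p-1) mod c) in the game with p pegs and c colors, where p ≤ c. If a secret s : Fin p → Fin c receives zero black pegs from questions q_0, q_{c-1}, q_{c-2}, ..., q_{c-x+1} for some x ≤ c - p, then for every position i ∈ Fin p, the color s(i) lies outside the set {(k + i) mod c : k ∈ {0} ∪ {c-x+1, ..., c-1}}, a set of exactly x excluded colors; hence at most c - x colors remain possible at each position. -/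
theorem reduction_phase_exclusion (p c x : ℕ) (hpc : p ≤ c) (hx1 : 1 ≤ x)
    (hx : x ≤ c - p) (s : Fin p → Fin c)
    (hzero : ∀ k ∈ insert 0 (Finset.Ico (c - x + 1) c),
      ∀ i : Fin p, (s i : ℕ) ≠ (k + (i : ℕ)) % c) :
    ∀ i : Fin p,
      (s i : ℕ) ∉ (insert 0 (Finset.Ico (c - x + 1) c)).image
        (fun k => (k + (i : ℕ)) % c) ∧
      ((insert 0 (Finset.Ico (c - x + 1) c)).image
        (fun k => (k + (i : ℕ)) % c)).card = x ∧
      (Finset.univ.filter (fun col : Fin c =>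
        (col : ℕ) ∉ (insert 0 (Finset.Ico (c - x + 1) c)).image
          (fun k => (k + (i : ℕ)) % c))).card ≤ c - x := by
  have hxc : x ≤ c := le_trans hx (Nat.sub_le c p)
  have hc : 0 < c := lt_of_lt_of_le hx1 hxc
  intro i
  set K : Finset ℕ := insert 0 (Finset.Ico (c - x + 1) c) with hK
  set T : Finset ℕ := K.image (fun k => (k + (i : ℕ)) % c) with hT
  have hKlt : ∀ k ∈ K, k < c := by
    intro k hk
    simp only [hK, Finset.mem_insert, Finset.mem_Ico] at hk
    rcases hk with rfl | ⟨_, h⟩ <;> omega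
  have hKcard : K.card = x := by
    rw [hK, Finset.card_insert_of_notMem (by simp), Nat.card_Ico]
    omega
  have hinj : Set.InjOn (fun k => (k + (i : ℕ)) % c) K := by
    intro a ha b hb hab
    have ha' := hKlt a ha
    have hb' := hKlt b hb
    simp only at hab
    have h2 : a ≡ b [MOD c] := Nat.ModEq.add_right_cancel' (i : ℕ) hab
    have := h2.eq_of_lt_of_lt ha' hb'
    exact this
  have hTcard : T.card = x := by
    rw [hT, Finset.card_image_of_injOn hinj, hKcard]
  have hTlt : ∀ t ∈ T, t < c := by
    intro t ht
    simp only [hT, Finset.mem_image] at ht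
    obtain ⟨k, _, rfl⟩ := ht
    exact Nat.mod_lt _ hc
  refine ⟨?_, hTcard, ?_⟩
  · intro hmem
    simp only [hT, Finset.mem_image] at hmem
    obtain ⟨k, hk, hkeq⟩ := hmem
    exact hzero k hk i hkeq.symm
  · have hsplit := Finset.card_filter_add_card_filter_not
      (s := (Finset.univ : Finset (Fin c)))
      (p := fun col : Fin c => (col : ℕ) ∈ T)
    have himg : ((Finset.univ.filter (fun col : Fin c => (col : ℕ) ∈ T)).image
        (Fin.val)).card = T.card := by
      congr 1
      ext t
      simp only [Finset.mem_image, Finset.mem_filter, Finset.mem_univ, true_and]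
      constructor
      · rintro ⟨col, hcol, rfl⟩; exact hcol
      · intro ht; exact ⟨⟨t, hTlt t ht⟩, ht, rfl⟩
    have hcardfil : (Finset.univ.filter (fun col : Fin c => (col : ℕ) ∈ T)).card = x := by
      rw [← hTcard, ← himg, Finset.card_image_of_injective _ Fin.val_injective]
    have hcu : (Finset.univ : Finset (Fin c)).card = c := by simp
    omega
end
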